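/- arXiv:1211.6552 — 2 statements merged into one kernel-verified Lean document; each statement's English description precedes it below -/
import Mathlib

section
/- Let A be a unital C*-algebra, a ∈ A, and R a real number with 0 ≤ R < ‖a‖. Then there exists a positive element b ∈ A, b ≠ 0, such that R² · b² ≤ b a* a b and R²‖b‖² < ‖b a* a b‖. -/
/-- In a unital C*-algebra `A`, if `0 ≤ R < ‖a‖`, then there is a positive nonzero `b`
with `R² b² ≤ b a* a b` and `R² ‖b‖² < ‖b a* a b‖`. -/
theorem stmt_2 (A : Type*) [CStarAlgebra A] [PartialOrder A] [StarOrderedRing A]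
    (a : A) (R : ℝ) (hR0 : 0 ≤ R) (hR : R < ‖a‖) :
    ∃ b : A, 0 ≤ b ∧ b ≠ 0 ∧ R ^ 2 • (b * b) ≤ b * (star a * a) * b ∧
      R ^ 2 * ‖b‖ ^ 2 < ‖b * (star a * a) * b‖ := by
  have ha0 : a ≠ 0 := by
    intro h; rw [h, norm_zero] at hR; exact absurd (hR0.trans_lt hR) (lt_irrefl 0)
  have : Nontrivial A := nontrivial_of_ne a 0 ha0
  set x : A := star a * a with hx_def
  have hx : 0 ≤ x := star_mul_self_nonneg a
  have hxsa : IsSelfAdjoint x := .star_mul_self a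
  have hnx : ‖x‖ = ‖a‖ ^ 2 := by
    rw [hx_def, CStarRing.norm_star_mul_self, sq]
  have hR2 : R ^ 2 < ‖a‖ ^ 2 := by
    nlinarith
  set c : ℝ := (R ^ 2 + ‖a‖ ^ 2) / 2 with hc_def
  have hcR : R ^ 2 < c := by rw [hc_def]; linarith
  have hca : c < ‖a‖ ^ 2 := by rw [hc_def]; linarith
  set f : ℝ → ℝ := fun t => max (t - c) 0 with hf_def
  have hfc : Continuous f := by fun_prop
  have hfnn : ∀ t, 0 ≤ f t := fun t => le_max_right _ _
  set b : A := cfc f x with hb_def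
  have hbnn : 0 ≤ b := cfc_nonneg fun t _ => hfnn t
  -- ‖a‖² ∈ spectrum
  have hmem : ‖a‖ ^ 2 ∈ spectrum ℝ x := by
    have := CStarAlgebra.norm_mem_spectrum_of_nonneg hx
    rwa [hnx] at this
  have hfval : f (‖a‖ ^ 2) = ‖a‖ ^ 2 - c := by
    rw [hf_def]; simpa using le_of_lt (by linarith : (0:ℝ) < ‖a‖ ^ 2 - c)
  have hfvalpos : 0 < f (‖a‖ ^ 2) := by rw [hfval]; linarith
  -- norm of b
  have hb_lb : f (‖a‖ ^ 2) ≤ ‖b‖ := by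
    have := norm_apply_le_norm_cfc f x hmem
    rwa [Real.norm_of_nonneg (hfnn _)] at this
  have hbne : b ≠ 0 := by
    intro h
    rw [h, norm_zero] at hb_lb
    exact absurd (lt_of_lt_of_le hfvalpos hb_lb) (lt_irrefl 0)
  have hspec_le : ∀ t ∈ spectrum ℝ x, t ≤ ‖a‖ ^ 2 := fun t ht => by
    have := spectrum.norm_le_norm_of_mem ht
    rw [hnx] at this
    exact (le_abs_self t).trans this
  have hb_ub : ‖b‖ ≤ ‖a‖ ^ 2 - c := by
    refine norm_cfc_le (by linarith) fun t ht => ?_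
    rw [Real.norm_of_nonneg (hfnn t)]
    have := hspec_le t ht
    simp only [hf_def]
    exact max_le (by linarith) (by linarith)
  have hbnorm : ‖b‖ = ‖a‖ ^ 2 - c := le_antisymm hb_ub (hfval ▸ hb_lb)
  -- b * x * b as cfc
  have hbxb : b * x * b = cfc (fun t => f t * t * f t) x := by
    rw [hb_def]
    rw [cfc_mul (fun t => f t * t) f x, cfc_mul f (fun t : ℝ => t) x, cfc_id' ℝ x]
  refine ⟨b, hbnn, hbne, ?_, ?_⟩
  · have : R ^ 2 • (b * b) = cfc (fun t => R ^ 2 • (f t * f t)) x := by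
      rw [hb_def, cfc_smul (R ^ 2) (fun t => f t * f t) x, cfc_mul f f x]
    rw [this, hbxb]
    refine cfc_mono fun t ht => ?_
    rcases le_or_gt (f t) 0 with h | h
    · have hft : f t = 0 := le_antisymm h (hfnn t)
      simp [hft]
    · have htc : c < t := by
        by_contra hcon
        push_neg at hcon
        have : f t = 0 := by rw [hf_def]; simp; linarith
        rw [this] at h; exact absurd h (lt_irrefl 0)
      have : R ^ 2 * (f t * f t) ≤ t * (f t * f t) := by
        apply mul_le_mul_of_nonneg_right (by linarith) (mul_nonneg (hfnn t) (hfnn t))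
      calc R ^ 2 • (f t * f t) = R ^ 2 * (f t * f t) := smul_eq_mul ..
        _ ≤ t * (f t * f t) := this
        _ = f t * t * f t := by ring
  · rw [hbxb]
    have hval : f (‖a‖ ^ 2) * ‖a‖ ^ 2 * f (‖a‖ ^ 2) ≤ ‖cfc (fun t => f t * t * f t) x‖ := by
      have := norm_apply_le_norm_cfc (fun t => f t * t * f t) x hmem
        (hfc.mul continuous_id |>.mul hfc |>.continuousOn)
      rwa [Real.norm_of_nonneg (by positivity)] at this
    have key : R ^ 2 * ‖b‖ ^ 2 < f (‖a‖ ^ 2) * ‖a‖ ^ 2 * f (‖a‖ ^ 2) := by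
      rw [hbnorm, ← hfval]
      have h1 : 0 < f (‖a‖ ^ 2) := hfvalpos
      nlinarith [mul_pos h1 h1, mul_lt_mul_of_pos_right hR2 (mul_pos h1 h1)]
    exact key.trans_le hval
end

section
/- Let J, J', J'' be index sets, H a column-finite J'×J-graded Hilbert space and H' a column-finite J''×J'-graded Hilbert space. Define functors F^H : Hf^J → Hf^{J'} on finite-dimensional J-graded Hilbert spaces by (F^H K)_p = ⊕_{r} H_{pr} ⊗ K_r and (F^H T)_p = ⊕_r id ⊗ T_r on morphisms. Then the composite F^{H'} ∘ F^H is naturally unitarily isomorphic to F^{H'' } where H''_{v r} = ⊕_{p∈J'} H'_{v p} ⊗ H_{p r} (the ℓ∞(J')-balanced tensor product), via the canonical associativity isomorphisms ⊕_p H'_{vp} ⊗ (⊕_r H_{pr} ⊗ K_r) ≅ ⊕_r (⊕_p H'_{vp} ⊗ H_{pr}) ⊗ K_r. -/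
open scoped TensorProduct DirectSum

noncomputable section

variable {J J' : Type*} [DecidableEq J] [DecidableEq J']

/-- The index swap `(Σ _ : J', J) ≃ (Σ _ : J, J')`. -/
def swapSigma (J' J : Type*) : (Σ _ : J', J) ≃ (Σ _ : J, J') :=
  (Equiv.sigmaEquivProd J' J).trans
    ((Equiv.prodComm J' J).trans (Equiv.sigmaEquivProd J J').symm)

/-- The canonical associativity/distributivity isomorphism
`⊕_p H'_{vp} ⊗ (⊕_r H_{pr} ⊗ K_r) ≅ ⊕_r (⊕_p H'_{vp} ⊗ H_{pr}) ⊗ K_r`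
identifying `(F^{H'} ∘ F^H)(K)_v` with `F^{H' ⊗_{ℓ∞(J')} H}(K)_v`. -/
def composeIso (H' : J' → Type*) (H : J' → J → Type*) (K : J → Type*)
    [∀ p, AddCommGroup (H' p)] [∀ p, Module ℂ (H' p)]
    [∀ p r, AddCommGroup (H p r)] [∀ p r, Module ℂ (H p r)]
    [∀ r, AddCommGroup (K r)] [∀ r, Module ℂ (K r)] :
    (⨁ p, H' p ⊗[ℂ] (⨁ r, H p r ⊗[ℂ] K r)) ≃ₗ[ℂ]
      ⨁ r, (⨁ p, H' p ⊗[ℂ] H p r) ⊗[ℂ] K r :=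
  (DFinsupp.mapRange.linearEquiv fun p =>
      TensorProduct.directSumRight ℂ ℂ (H' p) fun r => H p r ⊗[ℂ] K r) ≪≫ₗ
    (DirectSum.sigmaLcurryEquiv ℂ
      (δ := fun (p : J') (r : J) => H' p ⊗[ℂ] (H p r ⊗[ℂ] K r))).symm ≪≫ₗ
    DirectSum.lequivCongrLeft ℂ (swapSigma J' J) ≪≫ₗ
    DirectSum.sigmaLcurryEquiv ℂ
      (δ := fun (r : J) (p : J') => H' p ⊗[ℂ] (H p r ⊗[ℂ] K r)) ≪≫ₗ
    DFinsupp.mapRange.linearEquiv fun r =>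
      (DFinsupp.mapRange.linearEquiv fun p =>
          (TensorProduct.assoc ℂ (H' p) (H p r) (K r)).symm) ≪≫ₗ
        (TensorProduct.directSumLeft ℂ ℂ (fun p => H' p ⊗[ℂ] H p r) (K r)).symm

/-!
Both sides of the naturality square are linear maps out of `⊕_p H'_p ⊗ (⊕_r H_{pr} ⊗ K_r)`, so
it suffices to compare them on the generators `x ⊗ (h ⊗ k)` sitting in the summand `(p, r)`.
Each stage of `composeIso` (distributing, uncurrying the double sum, swapping the indices,
currying, reassociating) sends such a generator to a generator, so `composeIso` maps it to
`(x ⊗ h) ⊗ k` in the summand `(r, p)`; applying `T` before or after thus gives `(x ⊗ h) ⊗ T k`.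
-/

namespace DirectSum

variable {R : Type*} [Semiring R]

theorem mapRange_linearEquiv_lof {ι : Type*} [DecidableEq ι] {M N : ι → Type*}
    [∀ i, AddCommMonoid (M i)] [∀ i, Module R (M i)]
    [∀ i, AddCommMonoid (N i)] [∀ i, Module R (N i)]
    (e : ∀ i, M i ≃ₗ[R] N i) (i : ι) (x : M i) :
    DFinsupp.mapRange.linearEquiv e (lof R ι M i x) = lof R ι N i (e i x) :=
  lmap_lof (fun i => (e i).toLinearMap) i x

section Sigma

variable {ι : Type*} [DecidableEq ι] {α : ι → Type*} [∀ i, DecidableEq (α i)]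
  {δ : ∀ i, α i → Type*} [∀ i j, AddCommMonoid (δ i j)] [∀ i j, Module R (δ i j)]

theorem sigmaLcurryEquiv_lof (i : ι) (j : α i) (x : δ i j) :
    sigmaLcurryEquiv R (lof R (Σ i, α i) (fun ij => δ ij.1 ij.2) ⟨i, j⟩ x) =
      lof R ι (fun i => ⨁ j, δ i j) i (lof R (α i) (δ i) j x) :=
  DFinsupp.sigmaCurry_single ⟨i, j⟩ x

theorem sigmaLcurryEquiv_symm_lof (i : ι) (j : α i) (x : δ i j) :
    (sigmaLcurryEquiv R).symm (lof R ι (fun i => ⨁ j, δ i j) i (lof R (α i) (δ i) j x)) =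
      lof R (Σ i, α i) (fun ij => δ ij.1 ij.2) ⟨i, j⟩ x :=
  DFinsupp.sigmaUncurry_single i j x

end Sigma

theorem lequivCongrLeft_swapSigma_lof {M : (Σ _ : J', J) → Type*}
    [∀ i, AddCommMonoid (M i)] [∀ i, Module R (M i)]
    (p : J') (r : J) (x : M ⟨p, r⟩) :
    lequivCongrLeft R (swapSigma J' J) (lof R _ M ⟨p, r⟩ x) =
      lof R _ (fun i : Σ _ : J, J' => M ⟨i.2, i.1⟩) ⟨r, p⟩ x :=
  lequivCongrLeft_lof R (e := swapSigma J' J) (k := ⟨r, p⟩) rfl x x rfl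

end DirectSum

open DirectSum TensorProduct

theorem DFinsupp.linearMap_ext_single_tmul_single_tmul {R : Type*} [CommSemiring R]
    {ι κ : Type*} [DecidableEq ι] [DecidableEq κ]
    {A : ι → Type*} {B : ι → κ → Type*} {C : κ → Type*} {N : Type*}
    [∀ i, AddCommMonoid (A i)] [∀ i, Module R (A i)]
    [∀ i j, AddCommMonoid (B i j)] [∀ i j, Module R (B i j)]
    [∀ j, AddCommMonoid (C j)] [∀ j, Module R (C j)] [AddCommMonoid N] [Module R N]
    {f g : (Π₀ i, A i ⊗[R] Π₀ j, B i j ⊗[R] C j) →ₗ[R] N}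
    (h : ∀ i j (a : A i) (b : B i j) (c : C j),
      f (single i (a ⊗ₜ single j (b ⊗ₜ c))) = g (single i (a ⊗ₜ single j (b ⊗ₜ c)))) :
    f = g :=
  DirectSum.linearMap_ext R fun i => TensorProduct.ext <| LinearMap.ext fun a =>
    DirectSum.linearMap_ext R fun j => TensorProduct.ext <| LinearMap.ext₂ fun b c => h i j a b c

theorem composeIso_lof_tmul (H' : J' → Type*) (H : J' → J → Type*) (K : J → Type*)
    [∀ p, AddCommGroup (H' p)] [∀ p, Module ℂ (H' p)]
    [∀ p r, AddCommGroup (H p r)] [∀ p r, Module ℂ (H p r)]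
    [∀ r, AddCommGroup (K r)] [∀ r, Module ℂ (K r)]
    (p : J') (r : J) (x : H' p) (h : H p r) (k : K r) :
    composeIso H' H K (lof ℂ J' _ p (x ⊗ₜ lof ℂ J (fun r => H p r ⊗[ℂ] K r) r (h ⊗ₜ k))) =
      lof ℂ J (fun r => (⨁ p, H' p ⊗[ℂ] H p r) ⊗[ℂ] K r) r
        (lof ℂ J' (fun p => H' p ⊗[ℂ] H p r) p (x ⊗ₜ h) ⊗ₜ k) := by
  -- The stages of `composeIso` compose only up to the defeq
  -- `(swapSigma J' J).symm ⟨r, p⟩ = ⟨p, r⟩`, so some rewrites need `erw`.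
  rw [composeIso]
  repeat erw [LinearEquiv.trans_apply]
  rw [mapRange_linearEquiv_lof, directSumRight_tmul_lof, sigmaLcurryEquiv_symm_lof]
  erw [lequivCongrLeft_swapSigma_lof, sigmaLcurryEquiv_lof]
  rw [mapRange_linearEquiv_lof, LinearEquiv.trans_apply, mapRange_linearEquiv_lof,
    assoc_symm_tmul, directSumLeft_symm_lof_tmul]

theorem composeIso_naturality_lof_tmul (H' : J' → Type*) (H : J' → J → Type*) (K K' : J → Type*)
    [∀ p, AddCommGroup (H' p)] [∀ p, Module ℂ (H' p)]
    [∀ p r, AddCommGroup (H p r)] [∀ p r, Module ℂ (H p r)]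
    [∀ r, AddCommGroup (K r)] [∀ r, Module ℂ (K r)]
    [∀ r, AddCommGroup (K' r)] [∀ r, Module ℂ (K' r)]
    (T : ∀ r, K r →ₗ[ℂ] K' r) (p : J') (r : J) (x : H' p) (h : H p r) (k : K r) :
    composeIso H' H K' (lmap (fun p => (lmap fun r => T r |>.lTensor (H p r)).lTensor (H' p))
        (lof ℂ J' _ p (x ⊗ₜ lof ℂ J (fun r => H p r ⊗[ℂ] K r) r (h ⊗ₜ k)))) =
      lmap (fun r => (T r).lTensor (⨁ p, H' p ⊗[ℂ] H p r))
        (composeIso H' H K (lof ℂ J' _ p (x ⊗ₜ lof ℂ J (fun r => H p r ⊗[ℂ] K r) r (h ⊗ₜ k)))) := by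
  rw [lmap_lof, LinearMap.lTensor_tmul, lmap_lof, LinearMap.lTensor_tmul, composeIso_lof_tmul,
    composeIso_lof_tmul, lmap_lof, LinearMap.lTensor_tmul]

theorem stmt_13_general {J J' : Type*} [DecidableEq J] [DecidableEq J']
    (H' : J' → Type*) (H : J' → J → Type*) (K K' : J → Type*)
    [∀ p, NormedAddCommGroup (H' p)] [∀ p, InnerProductSpace ℂ (H' p)]
    [∀ p r, NormedAddCommGroup (H p r)] [∀ p r, InnerProductSpace ℂ (H p r)]
    [∀ r, NormedAddCommGroup (K r)] [∀ r, InnerProductSpace ℂ (K r)]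
    [∀ r, NormedAddCommGroup (K' r)] [∀ r, InnerProductSpace ℂ (K' r)]
    -- a morphism of graded Hilbert spaces `T : K → K'`:
    (T : ∀ r, K r →ₗ[ℂ] K' r) :
    -- naturality of the canonical isomorphism in `K`:
    (composeIso H' H K').toLinearMap.comp
        (DFinsupp.mapRange.linearMap fun p =>
          LinearMap.lTensor (H' p)
            (DFinsupp.mapRange.linearMap fun r => LinearMap.lTensor (H p r) (T r))) =
      (DFinsupp.mapRange.linearMap fun r =>
          LinearMap.lTensor (⨁ p, H' p ⊗[ℂ] H p r) (T r)).comp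
        (composeIso H' H K).toLinearMap :=
  DFinsupp.linearMap_ext_single_tmul_single_tmul (composeIso_naturality_lof_tmul H' H K K' T)

/-- Composition of the functors induced by column-finite bi-graded Hilbert spaces:
for column-finite `H'` (`J''×J'`-graded) and `H` (`J'×J`-graded), the composite
`F^{H'} ∘ F^H` is naturally isomorphic to `F^{H''}` where
`H''_{vr} = ⊕_p H'_{vp} ⊗ H_{pr}`, via the canonical associativity isomorphisms;
i.e. `composeIso` (at each `v`) is natural in the graded space `K`. -/
theorem stmt_13 {J J' J'' : Type*} [DecidableEq J] [DecidableEq J']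
    (v : J'')
    (H' : J' → Type*) (H : J' → J → Type*) (K K' : J → Type*)
    [∀ p, NormedAddCommGroup (H' p)] [∀ p, InnerProductSpace ℂ (H' p)]
    [∀ p r, NormedAddCommGroup (H p r)] [∀ p r, InnerProductSpace ℂ (H p r)]
    [∀ r, NormedAddCommGroup (K r)] [∀ r, InnerProductSpace ℂ (K r)]
    [∀ r, NormedAddCommGroup (K' r)] [∀ r, InnerProductSpace ℂ (K' r)]
    -- column-finiteness / finite-dimensionality hypotheses:
    [∀ p, FiniteDimensional ℂ (H' p)] [∀ p r, FiniteDimensional ℂ (H p r)]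
    [∀ r, FiniteDimensional ℂ (K r)] [∀ r, FiniteDimensional ℂ (K' r)]
    (hcfH : ∀ r : J, {p : J' | ∃ x : H p r, x ≠ 0}.Finite)
    (hcfH' : {p : J' | ∃ x : H' p, x ≠ 0}.Finite)
    (hK : {r : J | ∃ x : K r, x ≠ 0}.Finite) (hK' : {r : J | ∃ x : K' r, x ≠ 0}.Finite)
    -- a morphism of graded Hilbert spaces `T : K → K'`:
    (T : ∀ r, K r →ₗ[ℂ] K' r) :
    -- naturality of the canonical isomorphism in `K`:
    (composeIso H' H K').toLinearMap.comp
        (DFinsupp.mapRange.linearMap fun p =>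
          LinearMap.lTensor (H' p)
            (DFinsupp.mapRange.linearMap fun r => LinearMap.lTensor (H p r) (T r))) =
      (DFinsupp.mapRange.linearMap fun r =>
          LinearMap.lTensor (⨁ p, H' p ⊗[ℂ] H p r) (T r)).comp
        (composeIso H' H K).toLinearMap :=
  stmt_13_general H' H K K' T

end
end
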